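/- arXiv:2012.04002 — 8 statements merged into one kernel-verified Lean document; each statement's English description precedes it below -/
import Mathlib

section
/- Let $F : \mathbb{R}^d \to \mathbb{R}$ be coercive with locally Lipschitz gradient and finite infimum $F_\star$. Let $h : (0,\infty) \to [0,\infty)$ be $C^1$ with $\dot h \leq 0$, and let $r, q, p : (0,\infty) \to [0,\infty)$ be continuous with $r(t) \geq q(t)/4$ for all $t$. Define the energy $\mathcal{E}(h, (v,m,x)) = h(F(x) - F_\star) + \tfrac12 \| m / (v+\varepsilon)^{\odot 1/4} \|^2$ for $v \in [0,\infty)^d$, $m, x \in \mathbb{R}^d$, $\varepsilon > 0$. If $(v(t), m(t), x(t))$ solves $\dot v = p(t) S(x) - q(t) v$, $\dot m = h(t) \nabla F(x) - r(t) m$, $\dot x = -m/\sqrt{v+\varepsilon}$ with $S : \mathbb{R}^d \to [0,\infty)^d$ continuous, then for all $t$ in the interval of existence, $\frac{d}{dt} \mathcal{E}(h(t), (v(t),m(t),x(t))) \leq -\left(r(t) - \tfrac{q(t)}{4}\right) \left\| \frac{m(t)}{(v(t)+\varepsilon)^{\odot 1/4}} \right\|^2 + \dot h(t)(F(x(t))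 - F_\star) - \tfrac{p(t)}{4} \left\langle S(x(t)), \frac{m(t)^{\odot 2}}{(v(t)+\varepsilon)^{\odot 3/2}} \right\rangle$. In particular $t \mapsto \mathcal{E}(h(t), z(t))$ is non-increasing. -/
open Set Finset

/-- Helper: view a plain function as an element of Euclidean space. -/
def toE {d : ℕ} (f : Fin d → ℝ) : EuclideanSpace ℝ (Fin d) := WithLp.toLp 2 f

/-- The energy (Lyapunov) function
`𝓔(h,(v,m,x)) = h (F(x) - F⋆) + (1/2) ‖ m / (v+ε)^{⊙1/4} ‖²`. -/
noncomputable def energy {d : ℕ} (F : EuclideanSpace ℝ (Fin d) → ℝ) (Fstar ε : ℝ)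
    (h : ℝ) (v m x : EuclideanSpace ℝ (Fin d)) : ℝ :=
  h * (F x - Fstar) + (1 / 2) * ∑ i, (m i) ^ 2 / Real.sqrt (v i + ε)

/-!
Differentiating the energy along the flow, the term `h ⟪∇F(x), ẋ⟫ = -h ⟪∇F(x), m / √(v+ε)⟫`
coming from the potential cancels exactly against the part `h ⟪∇F(x), m / √(v+ε)⟫` of the
derivative of the kinetic term `½ ∑ mᵢ² / √(vᵢ+ε)`. What is left is `ḣ (F(x) - F⋆)`, the damping
`-r ∑ mᵢ² / √(vᵢ+ε)`, and the contribution `-(1/4) ∑ (p Sᵢ - q vᵢ) mᵢ² / (vᵢ+ε)^{3/2}` of the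
preconditioner; since `vᵢ ≤ vᵢ + ε`, its `q`-part is at most `(q/4) ∑ mᵢ² / √(vᵢ+ε)`.
All terms of the resulting bound are nonpositive, so the energy is antitone.
-/

open scoped RealInnerProductSpace

theorem HasDerivAt.piLp_apply {𝕜 ι : Type*} [NontriviallyNormedField 𝕜] [Fintype ι]
    {p : ENNReal} [Fact (1 ≤ p)] {E : ι → Type*} [∀ i, NormedAddCommGroup (E i)]
    [∀ i, NormedSpace 𝕜 (E i)] {f : 𝕜 → PiLp p E} {f' : PiLp p E} {t : 𝕜}
    (hf : HasDerivAt f f' t) (i : ι) : HasDerivAt (fun s => f s i) (f' i) t :=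
  (PiLp.hasFDerivAt_apply (𝕜 := 𝕜) p (f t) i).comp_hasDerivAt t hf

theorem HasGradientAt.comp_hasDerivAt {E : Type*} [NormedAddCommGroup E]
    [InnerProductSpace ℝ E] [CompleteSpace E] {f : E → ℝ} {g γ' : E} {γ : ℝ → E} {t : ℝ}
    (hf : HasGradientAt f g (γ t)) (hγ : HasDerivAt γ γ' t) :
    HasDerivAt (fun s => f (γ s)) ⟪g, γ'⟫ t :=
  hf.hasFDerivAt.comp_hasDerivAt t hγ

theorem Real.rpow_three_halves {a : ℝ} (ha : 0 ≤ a) : a ^ (3 / 2 : ℝ) = a * √a := by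
  rw [show (3 / 2 : ℝ) = 1 + 1 / 2 by norm_num, Real.rpow_add' ha (by norm_num),
    Real.rpow_one, Real.sqrt_eq_rpow]

theorem HasDerivAt.sq_div_sqrt {μ ν : ℝ → ℝ} {μ' ν' t : ℝ} (hμ : HasDerivAt μ μ' t)
    (hν : HasDerivAt ν ν' t) (hpos : 0 < ν t) :
    HasDerivAt (fun s => μ s ^ 2 / √(ν s))
      (2 * μ t * μ' / √(ν t) - μ t ^ 2 * ν' / (2 * ν t ^ (3 / 2 : ℝ))) t := by
  have hs := Real.sqrt_pos.2 hpos
  refine ((hμ.fun_pow 2).div (hν.sqrt hpos.ne') hs.ne').congr_deriv ?_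
  rw [Real.rpow_three_halves hpos.le]
  field_simp
  rw [Real.sq_sqrt hpos.le]
  push_cast
  ring

theorem mul_sq_div_rpow_three_halves_le {v a ε : ℝ} (hv : 0 ≤ v) (hε : 0 < ε) :
    v * (a ^ 2 / (v + ε) ^ (3 / 2 : ℝ)) ≤ a ^ 2 / √(v + ε) := by
  have hvε : 0 < v + ε := by linarith
  have hs := Real.sqrt_pos.2 hvε
  calc v * (a ^ 2 / (v + ε) ^ (3 / 2 : ℝ)) = v / (v + ε) * (a ^ 2 / √(v + ε)) := by
        rw [Real.rpow_three_halves hvε.le]; field_simp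
    _ ≤ a ^ 2 / √(v + ε) :=
        mul_le_of_le_one_left (by positivity) ((div_le_one hvε).2 (by linarith))

section Energy

variable {d : ℕ} {F : EuclideanSpace ℝ (Fin d) → ℝ} {Fstar ε : ℝ}

theorem hasDerivAt_energy {g v' m' x' : EuclideanSpace ℝ (Fin d)} {h : ℝ → ℝ} {h' t : ℝ}
    {v m x : ℝ → EuclideanSpace ℝ (Fin d)} (hF : HasGradientAt F g (x t))
    (hh : HasDerivAt h h' t) (hv : HasDerivAt v v' t) (hm : HasDerivAt m m' t)
    (hx : HasDerivAt x x' t) (hpos : ∀ i, 0 < v t i + ε) :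
    HasDerivAt (fun s => energy F Fstar ε (h s) (v s) (m s) (x s))
      (h' * (F (x t) - Fstar) + h t * ⟪g, x'⟫ + ∑ i, (m t i * m' i / √(v t i + ε)
        - m t i ^ 2 * v' i / (4 * (v t i + ε) ^ (3 / 2 : ℝ)))) t := by
  have hterm i := (hm.piLp_apply i).sq_div_sqrt ((hv.piLp_apply i).add_const ε) (hpos i)
  refine ((hh.mul ((hF.comp_hasDerivAt hx).sub_const Fstar)).add
    ((HasDerivAt.fun_sum fun i _ => hterm i).const_mul (1 / 2))).congr_deriv ?_
  rw [mul_sum]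
  congr 1
  refine sum_congr rfl fun i _ => ?_
  ring

theorem hasDerivAt_energy_along_flow {g σ : EuclideanSpace ℝ (Fin d)} {h : ℝ → ℝ}
    {h' r q p t : ℝ} {v m x : ℝ → EuclideanSpace ℝ (Fin d)} (hF : HasGradientAt F g (x t))
    (hh : HasDerivAt h h' t) (hv : HasDerivAt v (toE fun i => p * σ i - q * v t i) t)
    (hm : HasDerivAt m (toE fun i => h t * g i - r * m t i) t)
    (hx : HasDerivAt x (toE fun i => -(m t i) / √(v t i + ε)) t)
    (hpos : ∀ i, 0 < v t i + ε) :
    HasDerivAt (fun s => energy F Fstar ε (h s) (v s) (m s) (x s))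
      (h' * (F (x t) - Fstar) + ∑ i, (-r * (m t i ^ 2 / √(v t i + ε))
        - p / 4 * (σ i * (m t i ^ 2 / (v t i + ε) ^ (3 / 2 : ℝ)))
        + q / 4 * (v t i * (m t i ^ 2 / (v t i + ε) ^ (3 / 2 : ℝ))))) t := by
  refine (hasDerivAt_energy hF hh hv hm hx hpos).congr_deriv ?_
  simp only [toE, PiLp.inner_apply, RCLike.inner_apply, conj_trivial, mul_sum, add_assoc,
    ← sum_add_distrib]
  congr 1
  refine sum_congr rfl fun i _ => ?_
  ring

end Energy

theorem stmt1_general {d : ℕ} (F : EuclideanSpace ℝ (Fin d) → ℝ)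
    (G : EuclideanSpace ℝ (Fin d) → EuclideanSpace ℝ (Fin d))
    (hgrad : ∀ x, HasGradientAt F (G x) x)
    (Fstar : ℝ) (hFstar : IsGLB (Set.range F) Fstar)
    (ε : ℝ) (hε : 0 < ε)
    (h h' r q p : ℝ → ℝ)
    (hhC1 : ∀ t ∈ Ioi (0 : ℝ), HasDerivAt h (h' t) t)
    (hh'le : ∀ t ∈ Ioi (0 : ℝ), h' t ≤ 0)
    (hqpos : ∀ t ∈ Ioi (0 : ℝ), 0 ≤ q t)
    (hppos : ∀ t ∈ Ioi (0 : ℝ), 0 ≤ p t)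
    (hrq : ∀ t ∈ Ioi (0 : ℝ), q t / 4 ≤ r t)
    (S : EuclideanSpace ℝ (Fin d) → EuclideanSpace ℝ (Fin d))
    (hSpos : ∀ x i, 0 ≤ S x i)
    (t₁ t₂ : ℝ) (ht₁ : 0 < t₁)
    (v m x : ℝ → EuclideanSpace ℝ (Fin d))
    (hvpos : ∀ t ∈ Ioo t₁ t₂, ∀ i, 0 ≤ v t i)
    (hv : ∀ t ∈ Ioo t₁ t₂,
      HasDerivAt v (toE fun i => p t * S (x t) i - q t * v t i) t)
    (hm : ∀ t ∈ Ioo t₁ t₂,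
      HasDerivAt m (toE fun i => h t * G (x t) i - r t * m t i) t)
    (hx : ∀ t ∈ Ioo t₁ t₂,
      HasDerivAt x (toE fun i => -(m t i) / Real.sqrt (v t i + ε)) t) :
    (∀ t ∈ Ioo t₁ t₂,
      deriv (fun s => energy F Fstar ε (h s) (v s) (m s) (x s)) t ≤
        -(r t - q t / 4) * (∑ i, (m t i) ^ 2 / Real.sqrt (v t i + ε))
        + h' t * (F (x t) - Fstar)
        - (p t / 4) * ∑ i, S (x t) i * ((m t i) ^ 2 / (v t i + ε) ^ ((3 : ℝ) / 2))) ∧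
      AntitoneOn (fun s => energy F Fstar ε (h s) (v s) (m s) (x s)) (Ioo t₁ t₂) := by
  have hpos : ∀ t ∈ Ioo t₁ t₂, t ∈ Ioi (0 : ℝ) := fun t ht => ht₁.trans ht.1
  have hE t (ht : t ∈ Ioo t₁ t₂) := hasDerivAt_energy_along_flow (Fstar := Fstar) (hgrad (x t))
    (hhC1 t (hpos t ht)) (hv t ht) (hm t ht) (hx t ht) fun i => by linarith [hvpos t ht i]
  have hbound : ∀ t ∈ Ioo t₁ t₂,
      deriv (fun s => energy F Fstar ε (h s) (v s) (m s) (x s)) t ≤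
        -(r t - q t / 4) * (∑ i, (m t i) ^ 2 / Real.sqrt (v t i + ε))
        + h' t * (F (x t) - Fstar)
        - (p t / 4) * ∑ i, S (x t) i * ((m t i) ^ 2 / (v t i + ε) ^ ((3 : ℝ) / 2)) := by
    intro t ht
    have hq : 0 ≤ q t / 4 := by linarith [hqpos t (hpos t ht)]
    have hpreconditioner := mul_le_mul_of_nonneg_left (sum_le_sum (s := univ) fun i _ =>
      mul_sq_div_rpow_three_halves_le (a := m t i) (hvpos t ht i) hε) hq
    rw [(hE t ht).deriv, sum_add_distrib, sum_sub_distrib, ← mul_sum, ← mul_sum, ← mul_sum]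
    linarith
  refine ⟨hbound, antitoneOn_of_deriv_nonpos (convex_Ioo t₁ t₂)
    (fun t ht => (hE t ht).continuousAt.continuousWithinAt) ?_ ?_⟩
  · rw [interior_Ioo]
    exact fun t ht => (hE t ht).differentiableAt.differentiableWithinAt
  rw [interior_Ioo]
  intro t ht
  have hdamping : -(r t - q t / 4) * (∑ i, (m t i) ^ 2 / Real.sqrt (v t i + ε)) ≤ 0 :=
    mul_nonpos_of_nonpos_of_nonneg (by linarith [hrq t (hpos t ht)])
      (sum_nonneg fun i _ => by positivity)
  have hgap : h' t * (F (x t) - Fstar) ≤ 0 :=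
    mul_nonpos_of_nonpos_of_nonneg (hh'le t (hpos t ht)) (sub_nonneg.2 (hFstar.1 ⟨x t, rfl⟩))
  have hsignal : 0 ≤ (p t / 4) * ∑ i, S (x t) i * ((m t i) ^ 2 / (v t i + ε) ^ ((3 : ℝ) / 2)) :=
    mul_nonneg (by linarith [hppos t (hpos t ht)]) (sum_nonneg fun i _ =>
      mul_nonneg (hSpos _ _) (by have := hvpos t ht i; positivity))
  linarith [hbound t ht]

/-- decrease of the energy along the trajectories of the ODE. -/
theorem stmt1 {d : ℕ} (F : EuclideanSpace ℝ (Fin d) → ℝ)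
    (G : EuclideanSpace ℝ (Fin d) → EuclideanSpace ℝ (Fin d))
    (hgrad : ∀ x, HasGradientAt F (G x) x) (hGlip : LocallyLipschitz G)
    (hcoer : Filter.Tendsto F (Filter.cocompact _) Filter.atTop)
    (Fstar : ℝ) (hFstar : IsGLB (Set.range F) Fstar)
    (ε : ℝ) (hε : 0 < ε)
    (h h' r q p : ℝ → ℝ)
    (hhC1 : ∀ t ∈ Ioi (0 : ℝ), HasDerivAt h (h' t) t) (hh'cont : ContinuousOn h' (Ioi 0))
    (hh'le : ∀ t ∈ Ioi (0 : ℝ), h' t ≤ 0) (hhpos : ∀ t ∈ Ioi (0 : ℝ), 0 ≤ h t)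
    (hrcont : ContinuousOn r (Ioi 0)) (hqcont : ContinuousOn q (Ioi 0))
    (hpcont : ContinuousOn p (Ioi 0))
    (hrpos : ∀ t ∈ Ioi (0 : ℝ), 0 ≤ r t) (hqpos : ∀ t ∈ Ioi (0 : ℝ), 0 ≤ q t)
    (hppos : ∀ t ∈ Ioi (0 : ℝ), 0 ≤ p t)
    (hrq : ∀ t ∈ Ioi (0 : ℝ), q t / 4 ≤ r t)
    (S : EuclideanSpace ℝ (Fin d) → EuclideanSpace ℝ (Fin d))
    (hScont : Continuous S) (hSpos : ∀ x i, 0 ≤ S x i)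
    (t₁ t₂ : ℝ) (ht₁ : 0 < t₁)
    (v m x : ℝ → EuclideanSpace ℝ (Fin d))
    (hvpos : ∀ t ∈ Ioo t₁ t₂, ∀ i, 0 ≤ v t i)
    (hv : ∀ t ∈ Ioo t₁ t₂,
      HasDerivAt v (toE fun i => p t * S (x t) i - q t * v t i) t)
    (hm : ∀ t ∈ Ioo t₁ t₂,
      HasDerivAt m (toE fun i => h t * G (x t) i - r t * m t i) t)
    (hx : ∀ t ∈ Ioo t₁ t₂,
      HasDerivAt x (toE fun i => -(m t i) / Real.sqrt (v t i + ε)) t) :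
    (∀ t ∈ Ioo t₁ t₂,
      deriv (fun s => energy F Fstar ε (h s) (v s) (m s) (x s)) t ≤
        -(r t - q t / 4) * (∑ i, (m t i) ^ 2 / Real.sqrt (v t i + ε))
        + h' t * (F (x t) - Fstar)
        - (p t / 4) * ∑ i, S (x t) i * ((m t i) ^ 2 / (v t i + ε) ^ ((3 : ℝ) / 2))) ∧
      AntitoneOn (fun s => energy F Fstar ε (h s) (v s) (m s) (x s)) (Ioo t₁ t₂) :=
  stmt1_general F G hgrad Fstar hFstar ε hε h h' r q p hhC1 hh'le hqpos hppos hrq S hSpos t₁ t₂ ht₁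
    v m x hvpos hv hm hx
end

section
/- Let $F : \mathbb{R}^d \to \mathbb{R}$ be $C^1$ with locally Lipschitz gradient, and let $(m, x) : \mathbb{R}_+ \to \mathbb{R}^d \times \mathbb{R}^d$ solve the Nesterov ODE $\dot m(t) = \nabla F(x(t)) - \frac{\alpha}{t} m(t)$, $\dot x(t) = -m(t)$ for some $\alpha > 0$. Set $\kappa = \sqrt{2\alpha + 2}$, $\beta = \kappa^2/4$, and define $y(t) = \frac{\kappa\, m(\kappa\sqrt{t})}{2\sqrt{t}}$ and $u(t) = x(\kappa\sqrt{t})$ for $t > 0$. Then $(y, u)$ satisfies $\dot y(t) = \frac{\beta}{t}(\nabla F(u(t)) - y(t))$ and $\dot u(t) = -y(t)$. -/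
/-!
Substituting `τ = κ √t` is a chain-rule computation. With `y t = (κ / (2√t)) m (κ√t)`, the
derivative of the prefactor contributes `-y t / (2t)` and the friction term contributes
`-(α / (2t)) y t`, so the total friction is `(1 + α) / (2t) = κ² / (4t)`, precisely the
coefficient in front of the forcing once `κ² = 2α + 2`.
-/

open Real

theorem hasDerivAt_const_mul_sqrt (κ : ℝ) {t : ℝ} (ht : t ≠ 0) :
    HasDerivAt (fun s => κ * √s) (κ / (2 * √t)) t := by
  simpa [div_eq_mul_inv] using (hasDerivAt_sqrt ht).const_mul κ

theorem hasDerivAt_const_div_two_mul_sqrt (κ : ℝ) {t : ℝ} (ht : 0 < t) :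
    HasDerivAt (fun s => κ / (2 * √s)) (-(κ / (2 * √t)) / (2 * t)) t := by
  have hden : HasDerivAt (fun s => 2 * √s) (2 / (2 * √t)) t := by
    simpa [div_eq_mul_inv] using (hasDerivAt_sqrt ht.ne').const_mul 2
  refine ((hden.inv (by positivity)).const_mul κ).congr_deriv ?_
  field_simp
  rw [sq_sqrt ht.le]

section

variable {E : Type*} [NormedAddCommGroup E] [NormedSpace ℝ E]

theorem HasDerivAt.comp_const_mul_sqrt {f : ℝ → E} {f' : E} {κ t : ℝ} (ht : t ≠ 0)
    (hf : HasDerivAt f f' (κ * √t)) :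
    HasDerivAt (fun s => f (κ * √s)) ((κ / (2 * √t)) • f') t :=
  hf.scomp t (hasDerivAt_const_mul_sqrt κ ht)

theorem HasDerivAt.sqrt_timeChange_nesterov {m f : ℝ → E} {α κ t : ℝ}
    (hκ : κ ≠ 0) (hκα : κ ^ 2 = 2 * α + 2) (ht : 0 < t)
    (hm : HasDerivAt m (f (κ * √t) - (α / (κ * √t)) • m (κ * √t)) (κ * √t)) :
    HasDerivAt (fun s => (κ / (2 * √s)) • m (κ * √s))
      ((κ ^ 2 / 4 / t) • (f (κ * √t) - (κ / (2 * √t)) • m (κ * √t))) t := by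
  refine ((hasDerivAt_const_div_two_mul_sqrt κ ht).smul
    (hm.comp_const_mul_sqrt ht.ne')).congr_deriv ?_
  match_scalars
  · field_simp
    rw [sq_sqrt ht.le]
    ring
  · field_simp
    linear_combination (2 * t) * hκα + (2 * κ ^ 2 - 4) * sq_sqrt ht.le

end

theorem stmt2_general {d : ℕ}
    (G : EuclideanSpace ℝ (Fin d) → EuclideanSpace ℝ (Fin d))
    (α : ℝ) (hα : 0 < α)
    (m x : ℝ → EuclideanSpace ℝ (Fin d))
    (hm : ∀ t > (0 : ℝ), HasDerivAt m (G (x t) - (α / t) • m t) t)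
    (hx : ∀ t > (0 : ℝ), HasDerivAt x (-(m t)) t) :
    ∀ t > (0 : ℝ),
      (HasDerivAt
        (fun s => (Real.sqrt (2 * α + 2) / (2 * Real.sqrt s)) •
          m (Real.sqrt (2 * α + 2) * Real.sqrt s))
        (((Real.sqrt (2 * α + 2)) ^ 2 / 4 / t) •
          (G (x (Real.sqrt (2 * α + 2) * Real.sqrt t)) -
            (Real.sqrt (2 * α + 2) / (2 * Real.sqrt t)) •
              m (Real.sqrt (2 * α + 2) * Real.sqrt t))) t) ∧
      (HasDerivAt (fun s => x (Real.sqrt (2 * α + 2) * Real.sqrt s))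
        (-((Real.sqrt (2 * α + 2) / (2 * Real.sqrt t)) •
            m (Real.sqrt (2 * α + 2) * Real.sqrt t))) t) := by
  intro t ht
  have hpos : 0 < 2 * α + 2 := by linarith
  have hκ : 0 < √(2 * α + 2) := sqrt_pos.mpr hpos
  have hτ : 0 < √(2 * α + 2) * √t := mul_pos hκ (sqrt_pos.mpr ht)
  refine ⟨?_, ?_⟩
  · exact (hm _ hτ).sqrt_timeChange_nesterov (f := fun s => G (x s)) hκ.ne'
      (sq_sqrt hpos.le) ht
  · simpa only [smul_neg] using (hx _ hτ).comp_const_mul_sqrt ht.ne'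

/-- the change of variables relating the Nesterov ODE to the heavy-ball
ODE with polynomial memory. -/
theorem stmt2 {d : ℕ} (F : EuclideanSpace ℝ (Fin d) → ℝ)
    (G : EuclideanSpace ℝ (Fin d) → EuclideanSpace ℝ (Fin d))
    (hgrad : ∀ x, HasGradientAt F (G x) x) (hGlip : LocallyLipschitz G)
    (α : ℝ) (hα : 0 < α)
    (m x : ℝ → EuclideanSpace ℝ (Fin d))
    (hm : ∀ t > (0 : ℝ), HasDerivAt m (G (x t) - (α / t) • m t) t)
    (hx : ∀ t > (0 : ℝ), HasDerivAt x (-(m t)) t) :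
    ∀ t > (0 : ℝ),
      (HasDerivAt
        (fun s => (Real.sqrt (2 * α + 2) / (2 * Real.sqrt s)) •
          m (Real.sqrt (2 * α + 2) * Real.sqrt s))
        (((Real.sqrt (2 * α + 2)) ^ 2 / 4 / t) •
          (G (x (Real.sqrt (2 * α + 2) * Real.sqrt t)) -
            (Real.sqrt (2 * α + 2) / (2 * Real.sqrt t)) •
              m (Real.sqrt (2 * α + 2) * Real.sqrt t))) t) ∧
      (HasDerivAt (fun s => x (Real.sqrt (2 * α + 2) * Real.sqrt s))
        (-((Real.sqrt (2 * α + 2) / (2 * Real.sqrt t)) •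
            m (Real.sqrt (2 * α + 2) * Real.sqrt t))) t) :=
  stmt2_general G α hα m x hm hx
end

section
/- Let $r_\infty > 0$, $h_\infty > 0$, let $H \in \mathbb{R}^{d\times d}$ be a symmetric positive definite matrix, and let $V \in \mathbb{R}^{d\times d}$ be a diagonal matrix with positive diagonal entries. Consider the block matrix $\mathcal{H} = \begin{bmatrix} -r_\infty I_d & h_\infty H \\ -V & 0 \end{bmatrix} \in \mathbb{R}^{2d \times 2d}$. Then $\mathcal{H}$ is Hurwitz: every eigenvalue of $\mathcal{H}$ has strictly negative real part. Moreover, the largest real part of the eigenvalues of $\mathcal{H}$ equals $-L$ where $L = \frac{r_\infty}{2}\left(1 - \sqrt{\max\left(1 - \frac{4 h_\infty \pi_1}{r_\infty^2}, 0\right)}\right) > 0$ and $\pi_1 > 0$ is the smallest eigenvalue of $V^{1/2} H V^{1/2}$. -/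
/-!
The diagonal blocks of `ζ • 1 - 𝓗` are the scalars `(ζ + r) • 1` and `ζ • 1`, not both zero, so
block elimination through whichever is invertible shows that `ζ` is an eigenvalue of `𝓗` iff
`ζ ^ 2 + r ζ + h μ = 0` for an eigenvalue `μ` of `V H`. Since `V H = V^{1/2} (V^{1/2} H)` has the
characteristic polynomial of the symmetric matrix `V^{1/2} H V^{1/2}`, all such `μ` are real and
at least `π₁`. A root of `ζ ^ 2 + r ζ + c` satisfies `(2ζ + r) ^ 2 = r ^ 2 - 4c`, so its real part
is at most `(-r + √(max (r ^ 2 - 4c) 0)) / 2`, with equality for a suitable root; this bound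
decreases in `c`, so the largest real part is attained at `μ = π₁`.
-/

open Matrix Polynomial

namespace Matrix

variable {n K : Type*} [Fintype n] [DecidableEq n] [Field K]

theorem spectrum_mul_comm (A B : Matrix n n K) : spectrum K (A * B) = spectrum K (B * A) := by
  ext z
  simp only [mem_spectrum_iff_isRoot_charpoly, charpoly_mul_comm]

theorem det_smul_one_sub_mul_comm (c : K) (A B : Matrix n n K) :
    (c • 1 - A * B).det = (c • 1 - B * A).det := by
  rw [smul_one_eq_diagonal, ← scalar_apply, ← eval_charpoly, ← eval_charpoly, charpoly_mul_comm]

theorem det_fromBlocks_smul_one (a b : K) (B C : Matrix n n K) (hab : a ≠ 0 ∨ b ≠ 0) :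
    (fromBlocks (a • 1) B C (b • 1)).det = ((a * b) • 1 - C * B).det := by
  rcases hab with ha | hb
  · let : Invertible (a • (1 : Matrix n n K)) := ⟨a⁻¹ • 1, by simp [ha], by simp [ha]⟩
    rw [det_fromBlocks₁₁, show ⅟(a • (1 : Matrix n n K)) = a⁻¹ • 1 from rfl, det_smul, det_one,
      mul_one, ← det_smul]
    congr 1
    simp [smul_sub, smul_smul, ha]
  · let : Invertible (b • (1 : Matrix n n K)) := ⟨b⁻¹ • 1, by simp [hb], by simp [hb]⟩
    rw [det_fromBlocks₂₂, show ⅟(b • (1 : Matrix n n K)) = b⁻¹ • 1 from rfl, det_smul, det_one,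
      mul_one, ← det_smul, ← det_smul_one_sub_mul_comm]
    congr 1
    simp [smul_sub, smul_smul, hb, mul_comm]

theorem mem_spectrum_fromBlocks_iff {r : K} (hr : r ≠ 0) (B C : Matrix n n K) (ζ : K) :
    ζ ∈ spectrum K (fromBlocks (-(r • 1)) B (-C) 0) ↔ -(ζ ^ 2 + r * ζ) ∈ spectrum K (C * B) := by
  have hblock : scalar (n ⊕ n) ζ - fromBlocks (-(r • 1)) B (-C) 0 =
      fromBlocks ((ζ + r) • 1) (-B) C (ζ • 1) := by
    ext (i | i) (j | j) <;> by_cases hij : i = j <;> simp [hij]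
  have hne : ζ + r ≠ 0 ∨ ζ ≠ 0 := by
    by_contra! h
    exact hr (by simpa [h.2] using h.1)
  have hneg : scalar n (-(ζ ^ 2 + r * ζ)) - C * B = -(((ζ + r) * ζ) • 1 - C * -B) := by
    rw [scalar_apply, ← smul_one_eq_diagonal, Matrix.mul_neg]
    module
  rw [mem_spectrum_iff_isRoot_charpoly, mem_spectrum_iff_isRoot_charpoly, IsRoot, IsRoot,
    eval_charpoly, eval_charpoly, hblock, det_fromBlocks_smul_one _ _ _ _ hne, hneg, det_neg,
    mul_eq_zero, or_iff_right (by simp)]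

end Matrix

theorem Matrix.IsHermitian.spectrum_map_algebraMap {n : Type*} [Fintype n] [DecidableEq n]
    {N : Matrix n n ℝ} (hN : N.IsHermitian) :
    spectrum ℂ (N.map (algebraMap ℝ ℂ)) = algebraMap ℝ ℂ '' spectrum ℝ N := by
  ext z
  rw [mem_spectrum_iff_isRoot_charpoly, charpoly_map, hN.charpoly_eq,
    hN.spectrum_real_eq_range_eigenvalues]
  simp [Polynomial.map_prod, eval_prod, Finset.prod_eq_zero_iff, sub_eq_zero, eq_comm (a := z)]

theorem mem_spectrum_drift_iff {n : Type*} [Fintype n] [DecidableEq n] {r h : ℝ} (hr : r ≠ 0)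
    (hh : h ≠ 0) {H : Matrix n n ℝ} (hH : H.IsHermitian) {v : n → ℝ} (hv : ∀ i, 0 ≤ v i)
    (ζ : ℂ) :
    ζ ∈ spectrum ℂ ((fromBlocks (-(r • 1)) (h • H) (-(diagonal v)) 0).map (algebraMap ℝ ℂ)) ↔
      ∃ μ ∈ spectrum ℝ (diagonal (fun i => √(v i)) * H * diagonal (fun i => √(v i))),
        ζ ^ 2 + r * ζ + h * μ = 0 := by
  set W := diagonal (fun i => √(v i))
  have hWW : W * W = diagonal v := by
    simp [W, diagonal_mul_diagonal, Real.mul_self_sqrt (hv _)]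
  have hM : (W * H * W).IsHermitian := by
    simpa [W] using isHermitian_mul_mul_conjTranspose W hH
  have hmap : (fromBlocks (-(r • 1)) (h • H) (-(diagonal v)) 0).map (algebraMap ℝ ℂ) =
      fromBlocks (-((r : ℂ) • 1)) ((h • H).map (algebraMap ℝ ℂ))
        (-((diagonal v).map (algebraMap ℝ ℂ))) 0 := by
    rw [fromBlocks_map]
    congr 1 <;> ext i j <;> by_cases hij : i = j <;> simp [hij]
  rw [hmap, mem_spectrum_fromBlocks_iff (Complex.ofReal_ne_zero.2 hr), ← Matrix.map_mul, ← hWW,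
    Matrix.mul_assoc, Matrix.map_mul, spectrum_mul_comm, ← Matrix.map_mul,
    show W * (h • H) * W = h • (W * H * W) by simp,
    (hM.smul (IsSelfAdjoint.all h)).spectrum_map_algebraMap, ← Units.smul_mk0 hh,
    spectrum.unit_smul_eq_smul]
  simp only [Set.mem_image, Set.mem_smul_set, Units.smul_mk0, smul_eq_mul]
  constructor
  · rintro ⟨_, ⟨μ, hμ, rfl⟩, hx⟩
    exact ⟨μ, hμ, by push_cast at hx; linear_combination hx⟩
  · rintro ⟨μ, hμ, hq⟩
    exact ⟨_, ⟨μ, hμ, rfl⟩, by push_cast; linear_combination hq⟩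

theorem Complex.re_le_sqrt_max_of_sq_eq {w : ℂ} {D : ℝ} (hw : w ^ 2 = D) :
    w.re ≤ √(max D 0) := by
  have hre : w.re ^ 2 - w.im ^ 2 = D := by simpa [sq] using congrArg Complex.re hw
  have him : w.re * w.im = 0 := by
    have := congrArg Complex.im hw
    simp only [sq, Complex.mul_im, Complex.ofReal_im] at this
    linarith
  rcases mul_eq_zero.1 him with h0 | h0
  · rw [h0]
    positivity
  · calc w.re ≤ |w.re| := le_abs_self _
      _ = √(w.re ^ 2) := (Real.sqrt_sq_eq_abs _).symm
      _ ≤ √(max D 0) := Real.sqrt_le_sqrt (by rw [← hre, h0]; simp)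

theorem Complex.exists_sq_eq_re_eq_sqrt_max (D : ℝ) : ∃ w : ℂ, w ^ 2 = D ∧ w.re = √(max D 0) := by
  rcases le_or_gt 0 D with hD | hD
  · refine ⟨√D, ?_, by simp [max_eq_left hD]⟩
    rw [← Complex.ofReal_pow, Real.sq_sqrt hD]
  · refine ⟨√(-D) * Complex.I, ?_, by simp [max_eq_right hD.le]⟩
    rw [mul_pow, Complex.I_sq, ← Complex.ofReal_pow, Real.sq_sqrt (by linarith)]
    push_cast
    ring

theorem Real.sqrt_max_one_sub_div_sq {r : ℝ} (hr : 0 < r) (c : ℝ) :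
    √(max (1 - c / r ^ 2) 0) = √(max (r ^ 2 - c) 0) / r := by
  have hr2 : 0 < r ^ 2 := by positivity
  rw [show 1 - c / r ^ 2 = (r ^ 2 - c) / r ^ 2 by field_simp, ← zero_div (r ^ 2),
    max_div_div_right hr2.le, zero_div, Real.sqrt_div' _ hr2.le, Real.sqrt_sq hr.le]

theorem Real.sqrt_max_sq_sub_lt {r c : ℝ} (hr : 0 < r) (hc : 0 < c) : √(max (r ^ 2 - c) 0) < r := by
  rw [Real.sqrt_lt' hr]
  exact max_lt (by linarith) (by positivity)

theorem stmt5_general {d : ℕ} (r h : ℝ) (hr : 0 < r) (hh : 0 < h)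
    (H : Matrix (Fin d) (Fin d) ℝ) (hHsymm : H.IsSymm)
    (vd : Fin d → ℝ) (hvd : ∀ i, 0 < vd i)
    (π1 : ℝ)
    (hπ1 : IsLeast (spectrum ℝ
      (Matrix.diagonal (fun i => Real.sqrt (vd i)) * H *
        Matrix.diagonal (fun i => Real.sqrt (vd i)))) π1)
    (hπ1pos : 0 < π1) :
    (∀ ζ ∈ spectrum ℂ
        ((Matrix.fromBlocks (-(r • (1 : Matrix (Fin d) (Fin d) ℝ))) (h • H)
          (-(Matrix.diagonal vd)) 0).map (algebraMap ℝ ℂ)),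
      ζ.re < 0) ∧
    0 < r / 2 * (1 - Real.sqrt (max (1 - 4 * h * π1 / r ^ 2) 0)) ∧
    IsGreatest (Complex.re '' spectrum ℂ
        ((Matrix.fromBlocks (-(r • (1 : Matrix (Fin d) (Fin d) ℝ))) (h • H)
          (-(Matrix.diagonal vd)) 0).map (algebraMap ℝ ℂ)))
      (-(r / 2 * (1 - Real.sqrt (max (1 - 4 * h * π1 / r ^ 2) 0)))) := by
  have hspec := mem_spectrum_drift_iff hr.ne' hh.ne' (isHermitian_iff_isSymm.2 hHsymm)
    (fun i => (hvd i).le)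
  set S := √(max (r ^ 2 - 4 * h * π1) 0)
  have hSr : S < r := Real.sqrt_max_sq_sub_lt hr (by positivity)
  have hbound : ∀ ζ ∈ spectrum ℂ ((fromBlocks (-(r • (1 : Matrix (Fin d) (Fin d) ℝ))) (h • H)
      (-(diagonal vd)) 0).map (algebraMap ℝ ℂ)), ζ.re ≤ (S - r) / 2 := by
    intro ζ hζ
    obtain ⟨μ, hμ, hq⟩ := (hspec ζ).1 hζ
    have hw : (2 * ζ + r) ^ 2 = ((r ^ 2 - 4 * h * μ : ℝ) : ℂ) := by
      push_cast
      linear_combination 4 * hq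
    have hre := Complex.re_le_sqrt_max_of_sq_eq hw
    have hmono : √(max (r ^ 2 - 4 * h * μ) 0) ≤ S :=
      Real.sqrt_le_sqrt (max_le_max_right 0 (by nlinarith [hπ1.2 hμ]))
    rw [show (2 * ζ + r).re = 2 * ζ.re + r by simp] at hre
    linarith
  obtain ⟨w, hw, hwre⟩ := Complex.exists_sq_eq_re_eq_sqrt_max (r ^ 2 - 4 * h * π1)
  have hroot : (w - r) / 2 ∈ spectrum ℂ ((fromBlocks (-(r • (1 : Matrix (Fin d) (Fin d) ℝ)))
      (h • H) (-(diagonal vd)) 0).map (algebraMap ℝ ℂ)) :=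
    (hspec _).2 ⟨π1, hπ1.1, by push_cast at hw; linear_combination hw / 4⟩
  rw [Real.sqrt_max_one_sub_div_sq hr, show r / 2 * (1 - S / r) = (r - S) / 2 by field_simp]
  refine ⟨fun ζ hζ => by linarith [hbound ζ hζ], by linarith, ⟨_, hroot, ?_⟩, ?_⟩
  · rw [show ((w - r) / 2).re = (w.re - r) / 2 by simp, hwre]
    ring
  · rintro _ ⟨ζ, hζ, rfl⟩
    linarith [hbound ζ hζ]

/-- the drift matrix `𝓗 = [[-r∞ I, h∞ H],[-V, 0]]` is Hurwitz, and
the largest real part of its eigenvalues equals `-L`. -/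
theorem stmt5 {d : ℕ} (r h : ℝ) (hr : 0 < r) (hh : 0 < h)
    (H : Matrix (Fin d) (Fin d) ℝ) (hHsymm : H.IsSymm) (hHpd : H.PosDef)
    (vd : Fin d → ℝ) (hvd : ∀ i, 0 < vd i)
    (π1 : ℝ)
    (hπ1 : IsLeast (spectrum ℝ
      (Matrix.diagonal (fun i => Real.sqrt (vd i)) * H *
        Matrix.diagonal (fun i => Real.sqrt (vd i)))) π1)
    (hπ1pos : 0 < π1) :
    (∀ ζ ∈ spectrum ℂ
        ((Matrix.fromBlocks (-(r • (1 : Matrix (Fin d) (Fin d) ℝ))) (h • H)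
          (-(Matrix.diagonal vd)) 0).map (algebraMap ℝ ℂ)),
      ζ.re < 0) ∧
    0 < r / 2 * (1 - Real.sqrt (max (1 - 4 * h * π1 / r ^ 2) 0)) ∧
    IsGreatest (Complex.re '' spectrum ℂ
        ((Matrix.fromBlocks (-(r • (1 : Matrix (Fin d) (Fin d) ℝ))) (h • H)
          (-(Matrix.diagonal vd)) 0).map (algebraMap ℝ ℂ)))
      (-(r / 2 * (1 - Real.sqrt (max (1 - 4 * h * π1 / r ^ 2) 0)))) :=
  stmt5_general r h hr hh H hHsymm vd hvd π1 hπ1 hπ1pos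
end

section
/- Let $r_\infty, h_\infty, q_\infty, p_\infty > 0$ be reals, let $H \in \mathbb{R}^{d\times d}$ be symmetric, let $N \in \mathbb{R}^{d\times d}$ be arbitrary, and let $V \in \mathbb{R}^{d\times d}$ be diagonal with positive diagonal. Consider $D = \begin{bmatrix} -q_\infty I_d & 0 & p_\infty N \\ 0 & -r_\infty I_d & h_\infty H \\ 0 & -V & 0 \end{bmatrix} \in \mathbb{R}^{3d\times 3d}$. Then every eigenvalue $\zeta$ of $D$ with $\operatorname{Re}\zeta > 0$ is real, and there is a bijection between the eigenvalues of $D$ with positive real part (with multiplicity) and the negative eigenvalues of $V^{1/2} H V^{1/2}$ (with multiplicity): for each negative eigenvalue $\beta$ of $h_\infty V^{1/2} H V^{1/2}$, the unique positive root $\zeta$ of $\zeta^2 + r_\infty \zeta + \beta = 0$ is an eigenvalue of $D$, and conversely. -/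
/-! For `x ≠ 0`, the block-triangular shape of `D` and a Schur complement of its lower
`2d × 2d` block give `det (x - D) = (x + q)^d · det ((x² + r x) I + h H V)`; conjugating by
`V^{1/2}` turns the last factor into `∏ᵢ (x² + r x + βᵢ)` over the eigenvalues `βᵢ` of the
symmetric matrix `h V^{1/2} H V^{1/2}`. A root of `x² + r x + β` with `β` real is either real
or has real part `-r/2 < 0`, so the eigenvalues of `D` in the right half-plane are exactly the
positive roots of these quadratics, and such a root exists iff `βᵢ < 0`. -/

open Matrix

/-- The `3d × 3d` linearization matrix `D`. -/
noncomputable def Dmat {d : ℕ} (q r h p : ℝ) (H N : Matrix (Fin d) (Fin d) ℝ)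
    (vd : Fin d → ℝ) : Matrix (Fin d ⊕ (Fin d ⊕ Fin d)) (Fin d ⊕ (Fin d ⊕ Fin d)) ℝ :=
  Matrix.fromBlocks (-(q • (1 : Matrix (Fin d) (Fin d) ℝ)))
    (Matrix.fromCols 0 (p • N)) 0
    (Matrix.fromBlocks (-(r • (1 : Matrix (Fin d) (Fin d) ℝ))) (h • H)
      (-(Matrix.diagonal vd)) 0)

open Polynomial

theorem Matrix.mem_spectrum_iff_det_smul_one_sub_eq_zero {n K : Type*} [Fintype n] [DecidableEq n]
    [Field K] (A : Matrix n n K) (x : K) :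
    x ∈ spectrum K A ↔ (x • 1 - A).det = 0 := by
  rw [mem_spectrum_iff_isRoot_charpoly, IsRoot, eval_charpoly, smul_one_eq_diagonal]; rfl

theorem Matrix.IsHermitian.det_smul_one_add_map_eq_prod {n 𝕜 : Type*} [Fintype n]
    [DecidableEq n] [RCLike 𝕜] {A : Matrix n n ℝ} (hA : A.IsHermitian) (s : 𝕜) :
    (s • 1 + A.map (algebraMap ℝ 𝕜)).det = ∏ i, (s + (hA.eigenvalues i : 𝕜)) := by
  have h := congrArg (eval (-s)) (charpoly_map A (algebraMap ℝ 𝕜))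
  rw [eval_charpoly, hA.charpoly_eq, Polynomial.map_prod, eval_prod] at h
  have : s • (1 : Matrix n n 𝕜) + A.map (algebraMap ℝ 𝕜) =
      -(scalar n (-s) - A.map (algebraMap ℝ 𝕜)) := by
    rw [scalar_apply, ← smul_one_eq_diagonal, neg_smul, neg_sub, sub_neg_eq_add, add_comm]
  rw [this, det_neg, h, Fintype.card, ← Finset.prod_const, ← Finset.prod_mul_distrib]
  refine Finset.prod_congr rfl fun i _ => ?_
  simp only [Real.ringHom_apply, Polynomial.map_sub, map_X, map_C, eval_sub, eval_X, eval_C]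
  ring

theorem Matrix.det_fromBlocks_smul_one₂₂ {n K : Type*} [Fintype n] [DecidableEq n] [Field K]
    (A B C : Matrix n n K) {x : K} (hx : x ≠ 0) :
    (fromBlocks A B C (x • 1)).det = (x • A - B * C).det := by
  let _ : Invertible (x • (1 : Matrix n n K)) := invertibleOfRightInverse _ (x⁻¹ • 1) (by
    rw [smul_mul_smul_comm, mul_inv_cancel₀ hx, one_smul, mul_one])
  have hinv : ⅟(x • (1 : Matrix n n K)) = x⁻¹ • 1 := invOf_eq_right_inv (by
    rw [smul_mul_smul_comm, mul_inv_cancel₀ hx, one_smul, mul_one])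
  rw [det_fromBlocks₂₂, hinv, det_smul, det_one, mul_one, ← det_smul, smul_sub]
  simp only [Algebra.mul_smul_comm, mul_one, Algebra.smul_mul_assoc, smul_smul, ne_eq, hx,
    not_false_eq_true, mul_inv_cancel₀, one_smul]

theorem Matrix.det_smul_one_add_mul_mul_self {n R : Type*} [Fintype n] [DecidableEq n] [CommRing R]
    (A W : Matrix n n R) (hW : IsUnit W.det) (s : R) :
    (s • 1 + A * (W * W)).det = (s • 1 + W * A * W).det := by
  have : W * (s • 1 + A * (W * W)) = (s • 1 + W * A * W) * W := by
    simp only [Matrix.mul_add, Matrix.add_mul, Matrix.mul_smul, Matrix.smul_mul, Matrix.mul_one,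
      Matrix.one_mul, Matrix.mul_assoc]
  have h := congrArg det this
  rw [det_mul, det_mul, mul_comm] at h
  exact hW.mul_right_cancel h

theorem Complex.im_eq_zero_and_re_root_of_sq_add_mul_add_eq_zero {r β : ℝ} {z : ℂ}
    (hz : z ^ 2 + r * z + β = 0) (hre : 2 * z.re + r ≠ 0) :
    z.im = 0 ∧ z.re ^ 2 + r * z.re + β = 0 := by
  have hz_re := congrArg Complex.re hz
  have hz_im := congrArg Complex.im hz
  simp only [pow_two, Complex.add_re, Complex.mul_re, Complex.ofReal_re, Complex.ofReal_im,
    Complex.add_im, Complex.mul_im, Complex.zero_re, Complex.zero_im] at hz_re hz_im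
  have him : z.im = 0 := by
    have : z.im * (2 * z.re + r) = 0 := by linarith
    exact (mul_eq_zero.mp this).resolve_right hre
  refine ⟨him, ?_⟩
  rw [him] at hz_re
  linarith

section Dmat

variable {d : ℕ} {q r h p : ℝ} {H N : Matrix (Fin d) (Fin d) ℝ} {vd : Fin d → ℝ}

theorem smul_one_sub_map_Dmat (x : ℂ) :
    x • 1 - (Dmat q r h p H N vd).map (algebraMap ℝ ℂ) =
      fromBlocks ((x + q) • 1) (-(fromCols 0 (p • N)).map (algebraMap ℝ ℂ)) 0
        (fromBlocks ((x + r) • 1) (-(h • H).map (algebraMap ℝ ℂ))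
          ((diagonal vd).map (algebraMap ℝ ℂ)) (x • 1)) := by
  simp only [Dmat, fromBlocks_map, ← fromBlocks_one, fromBlocks_smul, sub_eq_add_neg,
    fromBlocks_neg, fromBlocks_add]
  congr 1 <;> simp [add_smul, smul_one_eq_diagonal]

theorem det_smul_one_sub_map_Dmat {x : ℂ} (hx : x ≠ 0) :
    (x • 1 - (Dmat q r h p H N vd).map (algebraMap ℝ ℂ)).det =
      (x + q) ^ d *
        ((x ^ 2 + r * x) • 1 + (h • H * diagonal vd).map (algebraMap ℝ ℂ)).det := by
  rw [smul_one_sub_map_Dmat, det_fromBlocks_zero₂₁, det_smul, det_one, mul_one,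
    Fintype.card_fin, det_fromBlocks_smul_one₂₂ _ _ _ hx, Matrix.map_mul, smul_smul,
    Matrix.neg_mul, sub_neg_eq_add]
  congr 4
  ring

theorem det_smul_one_sub_map_Dmat_eq_prod (hvd : ∀ i, 0 < vd i)
    (hM : (h • (diagonal (fun i => √(vd i)) * H * diagonal (fun i => √(vd i)))).IsHermitian)
    {x : ℂ} (hx : x ≠ 0) :
    (x • 1 - (Dmat q r h p H N vd).map (algebraMap ℝ ℂ)).det =
      (x + q) ^ d * ∏ i, (x ^ 2 + r * x + hM.eigenvalues i) := by
  rw [det_smul_one_sub_map_Dmat hx]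
  set W := diagonal (fun i => √(vd i))
  have hWW : W * W = diagonal vd := by
    rw [diagonal_mul_diagonal]
    exact congrArg diagonal (funext fun i => Real.mul_self_sqrt (hvd i).le)
  have hW : IsUnit (W.map (algebraMap ℝ ℂ)).det := by
    simpa [W, diagonal_map, det_diagonal, Finset.prod_ne_zero_iff] using
      fun i => (Real.sqrt_pos.2 (hvd i)).ne'
  rw [← hWW, Matrix.map_mul, Matrix.map_mul, det_smul_one_add_mul_mul_self _ _ hW,
    ← Matrix.map_mul, ← Matrix.map_mul, Matrix.mul_smul, Matrix.smul_mul,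
    hM.det_smul_one_add_map_eq_prod]
  rfl

theorem mem_spectrum_map_Dmat_iff (hq : 0 < q) (hvd : ∀ i, 0 < vd i)
    (hM : (h • (diagonal (fun i => √(vd i)) * H * diagonal (fun i => √(vd i)))).IsHermitian)
    {x : ℂ} (hx : 0 < x.re) :
    x ∈ spectrum ℂ ((Dmat q r h p H N vd).map (algebraMap ℝ ℂ)) ↔
      ∃ i, x ^ 2 + r * x + hM.eigenvalues i = 0 := by
  have hx0 : x ≠ 0 := fun h0 => by simp [h0] at hx
  have hxq : x + q ≠ 0 := fun h0 => by
    have := congrArg Complex.re h0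
    simp at this
    linarith
  rw [mem_spectrum_iff_det_smul_one_sub_eq_zero, det_smul_one_sub_map_Dmat_eq_prod hvd hM hx0,
    mul_eq_zero, or_iff_right (pow_ne_zero _ hxq), Finset.prod_eq_zero_iff]
  simp

end Dmat

theorem stmt6_general {d : ℕ} (q r h p : ℝ) (hq : 0 < q) (hr : 0 < r)
    (H N : Matrix (Fin d) (Fin d) ℝ) (hHsymm : H.IsSymm)
    (vd : Fin d → ℝ) (hvd : ∀ i, 0 < vd i) :
    (∀ ζ ∈ spectrum ℂ ((Dmat q r h p H N vd).map (algebraMap ℝ ℂ)),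
        0 < ζ.re → ζ.im = 0) ∧
    (∀ β ∈ spectrum ℝ (h • (Matrix.diagonal (fun i => Real.sqrt (vd i)) * H *
          Matrix.diagonal (fun i => Real.sqrt (vd i)))),
        β < 0 → ∀ ζ : ℝ, 0 < ζ → ζ ^ 2 + r * ζ + β = 0 →
          ((ζ : ℂ) ∈ spectrum ℂ ((Dmat q r h p H N vd).map (algebraMap ℝ ℂ)))) ∧
    (∀ ζ ∈ spectrum ℂ ((Dmat q r h p H N vd).map (algebraMap ℝ ℂ)),
        0 < ζ.re →
          ∃ β ∈ spectrum ℝ (h • (Matrix.diagonal (fun i => Real.sqrt (vd i)) * H *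
            Matrix.diagonal (fun i => Real.sqrt (vd i)))),
            β < 0 ∧ ζ.re ^ 2 + r * ζ.re + β = 0) := by
  have hM :
      (h • (diagonal (fun i => √(vd i)) * H * diagonal (fun i => √(vd i)))).IsHermitian := by
    have hW := isHermitian_conjTranspose_mul_mul (diagonal (fun i => √(vd i)))
      (isHermitian_iff_isSymm.2 hHsymm)
    rw [diagonal_conjTranspose, star_trivial] at hW
    exact hW.smul (IsSelfAdjoint.all h)
  have real_root : ∀ ζ ∈ spectrum ℂ ((Dmat q r h p H N vd).map (algebraMap ℝ ℂ)),
      0 < ζ.re → ζ.im = 0 ∧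
        ∃ i, hM.eigenvalues i < 0 ∧ ζ.re ^ 2 + r * ζ.re + hM.eigenvalues i = 0 := by
    intro ζ hζ hre
    obtain ⟨i, hi⟩ := (mem_spectrum_map_Dmat_iff hq hvd hM hre).1 hζ
    obtain ⟨him, hroot⟩ :=
      Complex.im_eq_zero_and_re_root_of_sq_add_mul_add_eq_zero hi (by linarith)
    exact ⟨him, i, by nlinarith, hroot⟩
  refine ⟨fun ζ hζ hre => (real_root ζ hζ hre).1, ?_, fun ζ hζ hre => ?_⟩
  · intro β hβ _ ζ hζ hroot
    obtain ⟨i, rfl⟩ := hM.spectrum_real_eq_range_eigenvalues ▸ hβ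
    exact (mem_spectrum_map_Dmat_iff hq hvd hM (by simpa using hζ)).2
      ⟨i, by exact_mod_cast hroot⟩
  · obtain ⟨-, i, hneg, hroot⟩ := real_root ζ hζ hre
    exact ⟨_, hM.eigenvalues_mem_spectrum_real i, hneg, hroot⟩

/-- eigenvalues of `D` with positive real part are real and correspond to
negative eigenvalues of `V^{1/2} H V^{1/2}` via the quadratic `ζ² + r∞ ζ + β = 0`. -/
theorem stmt6 {d : ℕ} (q r h p : ℝ) (hq : 0 < q) (hr : 0 < r) (hh : 0 < h) (hp : 0 < p)
    (H N : Matrix (Fin d) (Fin d) ℝ) (hHsymm : H.IsSymm)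
    (vd : Fin d → ℝ) (hvd : ∀ i, 0 < vd i) :
    (∀ ζ ∈ spectrum ℂ ((Dmat q r h p H N vd).map (algebraMap ℝ ℂ)),
        0 < ζ.re → ζ.im = 0) ∧
    (∀ β ∈ spectrum ℝ (h • (Matrix.diagonal (fun i => Real.sqrt (vd i)) * H *
          Matrix.diagonal (fun i => Real.sqrt (vd i)))),
        β < 0 → ∀ ζ : ℝ, 0 < ζ → ζ ^ 2 + r * ζ + β = 0 →
          ((ζ : ℂ) ∈ spectrum ℂ ((Dmat q r h p H N vd).map (algebraMap ℝ ℂ)))) ∧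
    (∀ ζ ∈ spectrum ℂ ((Dmat q r h p H N vd).map (algebraMap ℝ ℂ)),
        0 < ζ.re →
          ∃ β ∈ spectrum ℝ (h • (Matrix.diagonal (fun i => Real.sqrt (vd i)) * H *
            Matrix.diagonal (fun i => Real.sqrt (vd i)))),
            β < 0 ∧ ζ.re ^ 2 + r * ζ.re + β = 0) :=
  stmt6_general q r h p hq hr H N hHsymm vd hvd
end

section
/- Let $\zeta > 0$ be an eigenvalue of the block matrix $D = \begin{bmatrix} -q_\infty I_d & 0 & p_\infty N \\ 0 & -r_\infty I_d & h_\infty H \\ 0 & -V & 0 \end{bmatrix}$, where $q_\infty, r_\infty, h_\infty, p_\infty > 0$, $H$ is symmetric, $V$ is diagonal positive definite. Let $\beta = -\zeta(r_\infty + \zeta)/1$ (so that $\zeta^2 + r_\infty\zeta + h_\infty\beta' = 0$ with $\beta' = \beta/h_\infty$), and let $w \in \mathbb{R}^{1\times d}$ be a left eigenvector of $V^{1/2} H V^{1/2}$ with eigenvalue $\beta'$, where $h_\infty \beta' = -\zeta(r_\infty + \zeta)$. Then the row vector $u = [\,0_{1\times d},\; w V^{1/2},\; -(r_\infty + \zeta)\,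 w V^{-1/2}\,] \in \mathbb{R}^{1\times 3d}$ satisfies $u D = \zeta u$, i.e., $u$ is a left eigenvector of $D$ for the eigenvalue $\zeta$. -/
/-!
Write `S = V^{1/2}` and `u = [0, a, b]` with `a = w S`, `b = -(r + ζ) w S⁻¹`. The first block
column of `D` only meets the zero block, so `u D = [0, -r a - b V, h a H]`. Since `S⁻¹ V = S`,
`-b V = (r + ζ) a`, giving `ζ a` in the middle. Cancelling the right factor `S` in
`w S H S = β' w` gives `a H = β' w S⁻¹`, and `h β' = -ζ (r + ζ)` turns `h a H` into `ζ b`.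
-/

open Matrix

theorem Matrix.vecMul_eq_of_vecMul_mul_diagonal_eq_smul {m n K : Type*} [Fintype m]
    [Fintype n] [DecidableEq n] [Field K] {v : m → K} {A : Matrix m n K} {s w : n → K}
    {c : K} (hs : ∀ i, s i ≠ 0) (h : v ᵥ* (A * diagonal s) = c • w) :
    v ᵥ* A = fun i => c * (w i / s i) := by
  funext i
  have hi := congrFun h i
  rw [← vecMul_vecMul, vecMul_diagonal, Pi.smul_apply, smul_eq_mul] at hi
  rw [mul_div_assoc', eq_div_iff (hs i), hi]

theorem vecMul_Dmat_of_inl_eq_zero {d : ℕ} (q r h p : ℝ) (H N : Matrix (Fin d) (Fin d) ℝ)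
    (vd a b : Fin d → ℝ) :
    Sum.elim (fun _ => 0) (Sum.elim a b) ᵥ* Dmat q r h p H N vd =
      Sum.elim (fun _ => 0) (Sum.elim (-(r • a) - b ᵥ* diagonal vd) (h • (a ᵥ* H))) := by
  ext (j | j | j) <;>
    simp [Dmat, ← Pi.zero_def, vecMul_fromBlocks, vecMul_diagonal, vecMul_neg, vecMul_smul,
      sub_eq_add_neg]

theorem stmt8_general {d : ℕ} (q r h p : ℝ)
    (H N : Matrix (Fin d) (Fin d) ℝ)
    (vd : Fin d → ℝ) (hvd : ∀ i, 0 < vd i)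
    (ζ : ℝ)
    (β' : ℝ) (hquad : ζ ^ 2 + r * ζ + h * β' = 0)
    (w : Fin d → ℝ)
    (hwleft : Matrix.vecMul w
      (Matrix.diagonal (fun i => Real.sqrt (vd i)) * H *
        Matrix.diagonal (fun i => Real.sqrt (vd i))) = β' • w) :
    Matrix.vecMul
      (Sum.elim (fun _ : Fin d => (0 : ℝ))
        (Sum.elim (fun i => w i * Real.sqrt (vd i))
          (fun i => -(r + ζ) * (w i / Real.sqrt (vd i)))))
      (Dmat q r h p H N vd) =
    ζ • (Sum.elim (fun _ : Fin d => (0 : ℝ))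
        (Sum.elim (fun i => w i * Real.sqrt (vd i))
          (fun i => -(r + ζ) * (w i / Real.sqrt (vd i))))) := by
  have hV : (fun i => -(r + ζ) * (w i / √(vd i))) ᵥ* diagonal vd =
      fun i => -(r + ζ) * (w i * √(vd i)) := by
    funext i
    rw [vecMul_diagonal, mul_assoc, div_mul_comm, Real.div_sqrt, mul_comm (√(vd i))]
  have hH : (fun i => w i * √(vd i)) ᵥ* H = fun i => β' * (w i / √(vd i)) := by
    refine vecMul_eq_of_vecMul_mul_diagonal_eq_smul
      (fun i => (Real.sqrt_pos.2 (hvd i)).ne') ?_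
    rwa [show (fun i => w i * √(vd i)) = w ᵥ* diagonal (fun i => √(vd i)) from
      funext fun i => (vecMul_diagonal w (fun i => √(vd i)) i).symm,
      vecMul_vecMul, ← Matrix.mul_assoc]
  rw [vecMul_Dmat_of_inl_eq_zero, hV, hH]
  ext (j | j | j)
  · simp
  · simp only [Sum.elim_inr, Sum.elim_inl, Pi.sub_apply, Pi.neg_apply, Pi.smul_apply, smul_eq_mul]
    ring
  · simp only [Sum.elim_inr, Pi.smul_apply, smul_eq_mul]
    linear_combination (w j / √(vd j)) * hquad

/-- the explicit row vector `u = [0, w V^{1/2}, -(r∞+ζ) w V^{-1/2}]` is a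
left eigenvector of `D` for the positive eigenvalue `ζ`. -/
theorem stmt8 {d : ℕ} (q r h p : ℝ) (hq : 0 < q) (hr : 0 < r) (hh : 0 < h) (hp : 0 < p)
    (H N : Matrix (Fin d) (Fin d) ℝ) (hHsymm : H.IsSymm)
    (vd : Fin d → ℝ) (hvd : ∀ i, 0 < vd i)
    (ζ : ℝ) (hζ : 0 < ζ) (hζspec : ζ ∈ spectrum ℝ (Dmat q r h p H N vd))
    (β' : ℝ) (hquad : ζ ^ 2 + r * ζ + h * β' = 0)
    (w : Fin d → ℝ) (hw : w ≠ 0)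
    (hwleft : Matrix.vecMul w
      (Matrix.diagonal (fun i => Real.sqrt (vd i)) * H *
        Matrix.diagonal (fun i => Real.sqrt (vd i))) = β' • w) :
    Matrix.vecMul
      (Sum.elim (fun _ : Fin d => (0 : ℝ))
        (Sum.elim (fun i => w i * Real.sqrt (vd i))
          (fun i => -(r + ζ) * (w i / Real.sqrt (vd i)))))
      (Dmat q r h p H N vd) =
    ζ • (Sum.elim (fun _ : Fin d => (0 : ℝ))
        (Sum.elim (fun i => w i * Real.sqrt (vd i))
          (fun i => -(r + ζ) * (w i / Real.sqrt (vd i))))) :=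
  stmt8_general q r h p H N vd hvd ζ β' hquad w hwleft
end

section
/- Let $d \geq 1$, $\varepsilon > 0$, and let $v, v' \in [0,\infty)^d$ with $v' \geq (1 - \gamma q) v$ componentwise and $v' = (1-\gamma q)v + \gamma p\, s$ for some $s \in [0,\infty)^d$, $0 \leq \gamma q < 1$, $p \geq 0$. Then componentwise, $\sqrt{v + \varepsilon} - \sqrt{v' + \varepsilon} \leq \frac{\gamma q}{\sqrt{1-\gamma q}(1 + \sqrt{1-\gamma q})} \sqrt{v'}$. -/
/-!
Both square roots move by less once `ε` is added: `√(v + ε) - √(v' + ε) ≤ √v - √v'` when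
`v' ≤ v`. Since `v' ≥ δ v` with `δ = 1 - γ q`, we have `√v ≤ √v' / √δ`, so the decrease is at
most `(1 / √δ - 1) √v'`, and `1 / √δ - 1 = (1 - δ) / (√δ (1 + √δ))` is the stated constant.
-/

open Real

lemma sqrt_add_sub_sqrt_add_le_sqrt_sub_sqrt {a b ε : ℝ} (hb : 0 ≤ b) (hba : b ≤ a)
    (hε : 0 ≤ ε) : √(a + ε) - √(b + ε) ≤ √a - √b := by
  have hcross : √(a + ε) * √b ≤ √a * √(b + ε) := by
    rw [← sqrt_mul (by linarith), ← sqrt_mul (by linarith)]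
    exact sqrt_le_sqrt (by nlinarith)
  nlinarith [sq_sqrt (show 0 ≤ a + ε by linarith), sq_sqrt (show 0 ≤ b + ε by linarith),
    sq_sqrt (hb.trans hba), sq_sqrt hb, sqrt_nonneg (a + ε), sqrt_nonneg (b + ε),
    sqrt_nonneg a, sqrt_nonneg b]

lemma one_sub_div_sqrt_mul_one_add_sqrt {δ : ℝ} (hδ : 0 < δ) :
    (1 - δ) / (√δ * (1 + √δ)) = (√δ)⁻¹ - 1 := by
  have hs : 0 < √δ := sqrt_pos.mpr hδ
  field_simp
  nlinarith [sq_sqrt hδ.le]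

lemma sqrt_sub_sqrt_le_of_mul_le {δ a b : ℝ} (hδ : 0 < δ) (h : δ * a ≤ b) :
    √a - √b ≤ ((√δ)⁻¹ - 1) * √b := by
  have hs : 0 < √δ := sqrt_pos.mpr hδ
  have hab : √δ * √a ≤ √b := by
    rw [← sqrt_mul hδ.le]
    exact sqrt_le_sqrt h
  rw [sub_mul, inv_mul_eq_div, one_mul]
  exact sub_le_sub_right ((le_div_iff₀' hs).2 hab) _

theorem stmt10_general {d : ℕ} (ε γ q : ℝ) (hε : 0 < ε)
    (v v' : Fin d → ℝ)
    (hv' : ∀ i, 0 ≤ v' i)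
    (hγq0 : 0 ≤ γ * q) (hγq1 : γ * q < 1)
    (hge : ∀ i, (1 - γ * q) * v i ≤ v' i) :
    ∀ i, Real.sqrt (v i + ε) - Real.sqrt (v' i + ε) ≤
      (γ * q / (Real.sqrt (1 - γ * q) * (1 + Real.sqrt (1 - γ * q)))) *
        Real.sqrt (v' i) := by
  intro i
  have hδ : 0 < 1 - γ * q := by linarith
  have hconst := one_sub_div_sqrt_mul_one_add_sqrt hδ
  rw [sub_sub_cancel] at hconst
  rw [hconst]
  rcases le_total (v' i) (v i) with hle | hle
  · exact (sqrt_add_sub_sqrt_add_le_sqrt_sub_sqrt (hv' i) hle hε.le).trans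
      (sqrt_sub_sqrt_le_of_mul_le hδ (hge i))
  · have hcoeff : 0 ≤ (√(1 - γ * q))⁻¹ - 1 :=
      sub_nonneg.2 (one_le_inv₀ (sqrt_pos.2 hδ) |>.2 (sqrt_le_one.2 (by linarith)))
    have hdec : √(v i + ε) ≤ √(v' i + ε) := sqrt_le_sqrt (by linarith)
    linarith [mul_nonneg hcoeff (sqrt_nonneg (v' i))]

/-- componentwise bound on the decrease of `√(v+ε)` along one iteration
of an Adam-type update. -/
theorem stmt10 {d : ℕ} (hd : 1 ≤ d) (ε γ q p : ℝ) (hε : 0 < ε)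
    (v v' s : Fin d → ℝ)
    (hv : ∀ i, 0 ≤ v i) (hv' : ∀ i, 0 ≤ v' i) (hs : ∀ i, 0 ≤ s i)
    (hγq0 : 0 ≤ γ * q) (hγq1 : γ * q < 1) (hpnn : 0 ≤ p)
    (hge : ∀ i, (1 - γ * q) * v i ≤ v' i)
    (heq : ∀ i, v' i = (1 - γ * q) * v i + γ * p * s i) :
    ∀ i, Real.sqrt (v i + ε) - Real.sqrt (v' i + ε) ≤
      (γ * q / (Real.sqrt (1 - γ * q) * (1 + Real.sqrt (1 - γ * q)))) *
        Real.sqrt (v' i) :=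
  stmt10_general ε γ q hε v v' hv' hγq0 hγq1 hge
end

section
/- Let $(\mathcal{F}_n)$ be a filtration, $r_\infty > 0$, and let $(r_n)$, $(h_n)$ be bounded nonnegative sequences with $r_n \to r_\infty$. Let $(\gamma_n)$ be positive stepsizes with $\sum_n \gamma_n^2 < \infty$, and suppose $1 - \gamma_{n+1} r_n \geq 0$ for all large $n$. Let $(\Delta_n)$ be a martingale difference sequence with $\sup_n \mathbb{E}[\|\Delta_{n+1}\|^2 \mid \mathcal{F}_n] \leq C$ a.s. for a finite random variable $C$. Define $\tilde m_0 \in \mathbb{R}^d$ and $\tilde m_{n+1} = (1 - \gamma_{n+1} r_n)\tilde m_n + \gamma_{n+1} h_n \Delta_{n+1}$. Then $\sup_n \|\tilde m_n\| < \infty$ almost surely. -/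
/-!
Subtracting `S n = ∑ k < n, γ (k + 1) h k • Δ (k + 1)` from `mt` turns the recursion into
`u (n + 1) = (1 - a n) • u n + a n • (-S n)` with `a n = γ (n + 1) r n ∈ [0, 1]` for large `n`:
a convex combination, so `u` stays bounded as soon as `S` does. Coordinatewise, `S` is a
martingale; truncating each increment to the `𝓕 k`-measurable event where its conditional
variance is at most `q` gives a martingale with summable variances `≤ q (γ (k + 1) h k) ^ 2`,
hence L²-bounded and a.s. convergent. Since `C` is finite, almost every path of `S` coincides
with a path of one of these truncated martingales.
-/

open MeasureTheory Filter Finset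

section Deterministic

variable {E : Type*} [SeminormedAddCommGroup E] [NormedSpace ℝ E]

theorem exists_norm_le_of_convex_recursion {a : ℕ → ℝ} {x y : ℕ → E} {N : ℕ} {B : ℝ}
    (ha : ∀ n ≥ N, 0 ≤ a n ∧ a n ≤ 1) (hy : ∀ n, ‖y n‖ ≤ B)
    (hx : ∀ n ≥ N, x (n + 1) = (1 - a n) • x n + a n • y n) :
    ∃ M, ∀ n, ‖x n‖ ≤ M := by
  set M := max (∑ j ∈ range (N + 1), ‖x j‖) B
  have hinit : ∀ n ≤ N, ‖x n‖ ≤ M := fun n hn =>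
    le_max_of_le_left <| single_le_sum (fun j _ => norm_nonneg (x j)) (mem_range.2 (by omega))
  refine ⟨M, fun n => (le_total n N).elim (hinit n) fun hn => ?_⟩
  induction n, hn using Nat.le_induction with
  | base => exact hinit N le_rfl
  | succ n hn ih =>
    obtain ⟨ha0, ha1⟩ := ha n hn
    calc ‖x (n + 1)‖ ≤ (1 - a n) * ‖x n‖ + a n * ‖y n‖ := by
          rw [hx n hn]
          refine (norm_add_le _ _).trans_eq ?_
          rw [norm_smul, norm_smul, Real.norm_of_nonneg (by linarith), Real.norm_of_nonneg ha0]
      _ ≤ (1 - a n) * M + a n * M := by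
          gcongr
          exact (hy n).trans (le_max_right _ _)
      _ = M := by ring

theorem exists_norm_le_of_damped_recursion {a : ℕ → ℝ} {x S : ℕ → E} {N : ℕ} {B : ℝ}
    (ha : ∀ n ≥ N, 0 ≤ a n ∧ a n ≤ 1) (hS : ∀ n, ‖S n‖ ≤ B)
    (hx : ∀ n, x (n + 1) = (1 - a n) • x n + (S (n + 1) - S n)) :
    ∃ M, ∀ n, ‖x n‖ ≤ M := by
  obtain ⟨M, hM⟩ := exists_norm_le_of_convex_recursion (x := x - S) (y := -S) ha
    (fun n => (norm_neg (S n)).trans_le (hS n)) fun n _ => by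
      simp only [Pi.sub_apply, Pi.neg_apply, hx n, smul_sub, sub_smul, one_smul, smul_neg]
      abel
  refine ⟨M + B, fun n => ?_⟩
  calc ‖x n‖ = ‖(x - S) n + S n‖ := by simp
    _ ≤ M + B := (norm_add_le _ _).trans (add_le_add (hM n) (hS n))

end Deterministic

theorem EuclideanSpace.sq_apply_le_norm_sq {ι : Type*} [Fintype ι] (x : EuclideanSpace ℝ ι)
    (i : ι) : x i ^ 2 ≤ ‖x‖ ^ 2 := by
  simpa [Real.norm_eq_abs, sq_abs] using
    pow_le_pow_left₀ (norm_nonneg _) (PiLp.norm_apply_le x i) 2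

section SquareIntegrableIncrements

variable {Ω : Type*} {m0 : MeasurableSpace Ω} {μ : Measure Ω} {𝓕 : Filtration ℕ m0}

theorem integral_mul_eq_zero_of_condExp_eq_zero [IsFiniteMeasure μ] {m : MeasurableSpace Ω}
    (hm : m ≤ m0) {f g : Ω → ℝ} (hf : StronglyMeasurable[m] f) (hfg : Integrable (f * g) μ)
    (hg : Integrable g μ) (hg0 : μ[g|m] =ᵐ[μ] 0) :
    ∫ ω, f ω * g ω ∂μ = 0 := by
  have hpull : μ[f * g|m] =ᵐ[μ] 0 := by
    filter_upwards [condExp_mul_of_stronglyMeasurable_left hf hfg hg, hg0] with ω h h0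
    simp [h, h0]
  calc ∫ ω, f ω * g ω ∂μ = ∫ ω, (μ[f * g|m]) ω ∂μ := (integral_condExp hm).symm
    _ = 0 := by simp [integral_congr_ae hpull]

theorem martingale_sum_range_of_condExp_eq_zero [IsFiniteMeasure μ] {c : ℕ → Ω → ℝ}
    (hint : ∀ k, Integrable (c k) μ) (hmeas : ∀ k, StronglyMeasurable[𝓕 (k + 1)] (c k))
    (hc0 : ∀ k, μ[c k|𝓕 k] =ᵐ[μ] 0) :
    Martingale (fun n ω => ∑ k ∈ range n, c k ω) 𝓕 μ := by
  refine martingale_of_condExp_sub_eq_zero_nat (fun n => ?_)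
    (fun n => integrable_finsetSum _ fun k _ => hint k) fun n => ?_
  · exact Finset.stronglyMeasurable_fun_sum _ fun k hk =>
      (hmeas k).mono (𝓕.mono (mem_range.1 hk))
  · convert hc0 n using 2
    ext ω
    simp [sum_range_succ]

theorem integral_sq_sum_range_of_condExp_eq_zero [IsFiniteMeasure μ] {c : ℕ → Ω → ℝ}
    (hc : ∀ k, MemLp (c k) 2 μ) (hmeas : ∀ k, StronglyMeasurable[𝓕 (k + 1)] (c k))
    (hc0 : ∀ k, μ[c k|𝓕 k] =ᵐ[μ] 0) (n : ℕ) :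
    ∫ ω, (∑ k ∈ range n, c k ω) ^ 2 ∂μ = ∑ k ∈ range n, ∫ ω, c k ω ^ 2 ∂μ := by
  have hsq {f : Ω → ℝ} (hf : MemLp f 2 μ) : Integrable (fun ω => f ω ^ 2) μ :=
    (memLp_two_iff_integrable_sq hf.aestronglyMeasurable).1 hf
  induction n with
  | zero => simp
  | succ n ih =>
    set Z : Ω → ℝ := fun ω => ∑ k ∈ range n, c k ω
    have hZ : MemLp Z 2 μ := memLp_finsetSum _ fun k _ => hc k
    have hZc : Integrable (fun ω => Z ω * c n ω) μ := hZ.integrable_mul (hc n)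
    have hcross : ∫ ω, Z ω * c n ω ∂μ = 0 :=
      integral_mul_eq_zero_of_condExp_eq_zero (𝓕.le n)
        (Finset.stronglyMeasurable_fun_sum _ fun k hk =>
          (hmeas k).mono (𝓕.mono (mem_range.1 hk)))
        hZc ((hc n).integrable one_le_two) (hc0 n)
    calc ∫ ω, (∑ k ∈ range (n + 1), c k ω) ^ 2 ∂μ
        = ∫ ω, Z ω ^ 2 + 2 * (Z ω * c n ω) + c n ω ^ 2 ∂μ := by
          congr 1; ext ω; simp only [Z, sum_range_succ]; ring
      _ = ∫ ω, Z ω ^ 2 ∂μ + 2 * ∫ ω, Z ω * c n ω ∂μ + ∫ ω, c n ω ^ 2 ∂μ := by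
          have h2Zc := hZc.const_mul 2
          rw [integral_add (f := fun ω => Z ω ^ 2 + 2 * (Z ω * c n ω)) ((hsq hZ).add h2Zc)
            (hsq (hc n)), integral_add (hsq hZ) h2Zc, integral_const_mul]
      _ = ∑ k ∈ range (n + 1), ∫ ω, c k ω ^ 2 ∂μ := by
          rw [ih, hcross, sum_range_succ]; ring

theorem eLpNorm_one_le_ofReal_one_add_integral_sq [IsProbabilityMeasure μ] {f : Ω → ℝ}
    (hf : MemLp f 2 μ) :
    eLpNorm f 1 μ ≤ ENNReal.ofReal (1 + ∫ ω, f ω ^ 2 ∂μ) := by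
  have hsq : Integrable (fun ω => f ω ^ 2) μ :=
    (memLp_two_iff_integrable_sq hf.aestronglyMeasurable).1 hf
  have hint : Integrable f μ := hf.integrable one_le_two
  rw [eLpNorm_one_eq_lintegral_enorm, ← ofReal_integral_norm_eq_lintegral_enorm hint]
  refine ENNReal.ofReal_le_ofReal ?_
  calc ∫ ω, ‖f ω‖ ∂μ ≤ ∫ ω, 1 + f ω ^ 2 ∂μ :=
        integral_mono hint.norm ((integrable_const 1).add hsq) fun ω => by
          nlinarith [sq_nonneg (|f ω| - 1), sq_abs (f ω), Real.norm_eq_abs (f ω)]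
    _ = 1 + ∫ ω, f ω ^ 2 ∂μ := by
        rw [integral_add (integrable_const 1) hsq]; simp

theorem ae_tendsto_sum_range_of_condExp_eq_zero [IsProbabilityMeasure μ] {c : ℕ → Ω → ℝ}
    (hc : ∀ k, MemLp (c k) 2 μ) (hmeas : ∀ k, StronglyMeasurable[𝓕 (k + 1)] (c k))
    (hc0 : ∀ k, μ[c k|𝓕 k] =ᵐ[μ] 0) (hsum : Summable fun k => ∫ ω, c k ω ^ 2 ∂μ) :
    ∀ᵐ ω ∂μ, ∃ l, Tendsto (fun n => ∑ k ∈ range n, c k ω) atTop (nhds l) := by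
  have hbdd (n : ℕ) : eLpNorm (fun ω => ∑ k ∈ range n, c k ω) 1 μ ≤
      ENNReal.ofReal (1 + ∑' k, ∫ ω, c k ω ^ 2 ∂μ) := by
    refine (eLpNorm_one_le_ofReal_one_add_integral_sq
      (memLp_finsetSum _ fun k _ => hc k)).trans (ENNReal.ofReal_le_ofReal ?_)
    rw [integral_sq_sum_range_of_condExp_eq_zero hc hmeas hc0]
    gcongr
    exact hsum.sum_le_tsum _ fun k _ => integral_nonneg fun ω => sq_nonneg _
  have hmart := martingale_sum_range_of_condExp_eq_zero
    (fun k => (hc k).integrable one_le_two) hmeas hc0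
  filter_upwards [hmart.submartingale.ae_tendsto_limitProcess hbdd] with ω hω
  exact ⟨_, hω⟩

theorem setIntegral_le_of_condExp_le [IsProbabilityMeasure μ] {m : MeasurableSpace Ω}
    (hm : m ≤ m0) {f : Ω → ℝ} (hf : Integrable f μ) {s : Set Ω} (hs : MeasurableSet[m] s)
    {q : ℝ} (hq : 0 ≤ q) (hle : ∀ ω ∈ s, (μ[f|m]) ω ≤ q) :
    ∫ ω in s, f ω ∂μ ≤ q := by
  rw [← setIntegral_condExp hm hf hs]
  calc ∫ ω in s, (μ[f|m]) ω ∂μ ≤ ∫ ω in s, q ∂μ :=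
        setIntegral_mono_on integrable_condExp.integrableOn (integrable_const q).integrableOn
          (hm s hs) hle
    _ = μ.real s * q := by rw [setIntegral_const, smul_eq_mul]
    _ ≤ q := mul_le_of_le_one_left hq measureReal_le_one

theorem ae_tendsto_sum_range_mul_of_condExp_sq_le [IsProbabilityMeasure μ] {ξ : ℕ → Ω → ℝ}
    (hmeas : ∀ k, StronglyMeasurable[𝓕 (k + 1)] (ξ k))
    (hsq : ∀ k, Integrable (fun ω => ξ k ω ^ 2) μ) (hξ0 : ∀ k, μ[ξ k|𝓕 k] =ᵐ[μ] 0) {C : Ω → ℝ}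
    (hC : ∀ᵐ ω ∂μ, ∀ k, (μ[fun ω => ξ k ω ^ 2|𝓕 k]) ω ≤ C ω) {b : ℕ → ℝ}
    (hb : Summable fun k => b k ^ 2) :
    ∀ᵐ ω ∂μ, ∃ l, Tendsto (fun n => ∑ k ∈ range n, b k * ξ k ω) atTop (nhds l) := by
  have hξ (k : ℕ) : MemLp (ξ k) 2 μ :=
    (memLp_two_iff_integrable_sq ((hmeas k).mono (𝓕.le _)).aestronglyMeasurable).2 (hsq k)
  set A : ℕ → ℕ → Set Ω := fun q k => {ω | (μ[fun ω => ξ k ω ^ 2|𝓕 k]) ω ≤ q}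
  have hA (q k : ℕ) : MeasurableSet[𝓕 k] (A q k) :=
    measurableSet_le stronglyMeasurable_condExp.measurable measurable_const
  have htrunc (q : ℕ) : ∀ᵐ ω ∂μ, ∃ l, Tendsto
      (fun n => ∑ k ∈ range n, (A q k).indicator (b k • ξ k) ω) atTop (nhds l) := by
    refine ae_tendsto_sum_range_of_condExp_eq_zero
      (fun k => ((hξ k).const_smul (b k)).indicator (𝓕.le k _ (hA q k)))
      (fun k => ((hmeas k).const_smul (b k)).indicator (𝓕.mono k.le_succ _ (hA q k)))
      (fun k => ?_) (.of_nonneg_of_le (fun k => integral_nonneg fun ω => sq_nonneg _)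
        (fun k => ?_) (hb.mul_left (q : ℝ)))
    · filter_upwards [condExp_indicator (((hξ k).integrable one_le_two).smul (b k)) (hA q k),
        condExp_smul (μ := μ) (b k) (ξ k) (𝓕 k), hξ0 k] with ω h1 h2 h3
      simp [h1, Set.indicator_apply, h2, h3]
    · calc ∫ ω, (A q k).indicator (b k • ξ k) ω ^ 2 ∂μ
          = ∫ ω, (A q k).indicator (fun ω => b k ^ 2 * ξ k ω ^ 2) ω ∂μ := by
            congr 1; ext ω; by_cases hω : ω ∈ A q k <;> simp [hω, mul_pow]
        _ = b k ^ 2 * ∫ ω in A q k, ξ k ω ^ 2 ∂μ := by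
            rw [integral_indicator (𝓕.le k _ (hA q k)), integral_const_mul]
        _ ≤ b k ^ 2 * q := by
            gcongr
            exact setIntegral_le_of_condExp_le (𝓕.le k) (hsq k) (hA q k) q.cast_nonneg
              fun ω hω => hω
        _ = q * b k ^ 2 := mul_comm _ _
  filter_upwards [ae_all_iff.2 htrunc, hC] with ω hω hCω
  obtain ⟨l, hl⟩ := hω ⌈C ω⌉₊
  refine ⟨l, hl.congr fun n => sum_congr rfl fun k _ => ?_⟩
  have hmem : ω ∈ A ⌈C ω⌉₊ k := (hCω k).trans (Nat.le_ceil _)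
  simp [hmem]

theorem ae_tendsto_sum_range_smul_of_condExp_norm_sq_le [IsProbabilityMeasure μ] {ι : Type*}
    [Fintype ι] {ξ : ℕ → Ω → EuclideanSpace ℝ ι}
    (hmeas : ∀ k, StronglyMeasurable[𝓕 (k + 1)] (ξ k))
    (hsq : ∀ k, Integrable (fun ω => ‖ξ k ω‖ ^ 2) μ) (hξ0 : ∀ k, μ[ξ k|𝓕 k] =ᵐ[μ] 0)
    {C : Ω → ℝ} (hC : ∀ᵐ ω ∂μ, ∀ k, (μ[fun ω => ‖ξ k ω‖ ^ 2|𝓕 k]) ω ≤ C ω) {b : ℕ → ℝ}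
    (hb : Summable fun k => b k ^ 2) :
    ∀ᵐ ω ∂μ, ∃ l, Tendsto (fun n => ∑ k ∈ range n, b k • ξ k ω) atTop (nhds l) := by
  have hint (k : ℕ) : Integrable (ξ k) μ :=
    ((memLp_two_iff_integrable_sq_norm ((hmeas k).mono (𝓕.le _)).aestronglyMeasurable).2
      (hsq k)).integrable one_le_two
  have hcoord (i : ι) : ∀ᵐ ω ∂μ, ∃ l,
      Tendsto (fun n => ∑ k ∈ range n, b k * ξ k ω i) atTop (nhds l) := by
    have hmeas_i (k : ℕ) : StronglyMeasurable[𝓕 (k + 1)] (fun ω => ξ k ω i) :=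
      (EuclideanSpace.proj i).continuous.comp_stronglyMeasurable (hmeas k)
    have hsq_i (k : ℕ) : Integrable (fun ω => ξ k ω i ^ 2) μ :=
      (hsq k).mono' (((hmeas_i k).mono (𝓕.le _)).aestronglyMeasurable.pow 2)
        (ae_of_all _ fun ω => by
          simpa using EuclideanSpace.sq_apply_le_norm_sq (ξ k ω) i)
    refine ae_tendsto_sum_range_mul_of_condExp_sq_le hmeas_i hsq_i (fun k => ?_) (C := C) ?_ hb
    · filter_upwards [(EuclideanSpace.proj i).comp_condExp_comm (m := 𝓕 k) (hint k), hξ0 k]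
        with ω h1 h2
      simpa [h2, Function.comp_def] using h1.symm
    · filter_upwards [hC, ae_all_iff.2 fun k => condExp_mono (m := 𝓕 k) (hsq_i k) (hsq k)
        (ae_of_all _ fun ω => EuclideanSpace.sq_apply_le_norm_sq (ξ k ω) i)] with ω h1 h2 k
      exact (h2 k).trans (h1 k)
  filter_upwards [ae_all_iff.2 hcoord] with ω hω
  choose l hl using hω
  refine ⟨WithLp.toLp 2 l, ?_⟩
  have hpi : Tendsto (fun n => WithLp.ofLp (∑ k ∈ range n, b k • ξ k ω)) atTop (nhds l) :=
    tendsto_pi_nhds.2 fun i => by simpa using hl i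
  simpa only [Function.comp_def, WithLp.toLp_ofLp] using
    ((PiLp.continuous_toLp 2 _).tendsto l).comp hpi

end SquareIntegrableIncrements

theorem stmt11_general {Ω : Type*} {m0 : MeasurableSpace Ω} {μ : Measure Ω}
    [IsProbabilityMeasure μ] (𝓕 : Filtration ℕ m0) {d : ℕ}
    (r h γ : ℕ → ℝ)
    (hrpos : ∀ n, 0 ≤ r n) (hhpos : ∀ n, 0 ≤ h n)
    (hhbdd : ∃ Hb, ∀ n, h n ≤ Hb)
    (hγpos : ∀ n, 0 < γ n) (hγ2 : Summable fun n => γ n ^ 2)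
    (hstep : ∃ N, ∀ n ≥ N, 0 ≤ 1 - γ (n + 1) * r n)
    (Δ : ℕ → Ω → EuclideanSpace ℝ (Fin d))
    (hadapt : Adapted 𝓕 Δ)
    (hint2 : ∀ n, Integrable (fun ω => ‖Δ n ω‖ ^ 2) μ)
    (hmds : ∀ n, μ[Δ (n + 1) | 𝓕 n] =ᵐ[μ] 0)
    (C : Ω → ℝ)
    (hC : ∀ᵐ ω ∂μ, ∀ n, (μ[fun ω' => ‖Δ (n + 1) ω'‖ ^ 2 | 𝓕 n]) ω ≤ C ω)
    (mt : ℕ → Ω → EuclideanSpace ℝ (Fin d))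
    (hrec : ∀ n ω, mt (n + 1) ω =
      (1 - γ (n + 1) * r n) • mt n ω + (γ (n + 1) * h n) • Δ (n + 1) ω) :
    ∀ᵐ ω ∂μ, ∃ M, ∀ n, ‖mt n ω‖ ≤ M := by
  obtain ⟨N, hN⟩ := hstep
  obtain ⟨Hb, hHb⟩ := hhbdd
  have hb : Summable fun k => (γ (k + 1) * h k) ^ 2 :=
    (((summable_nat_add_iff 1).2 hγ2).mul_left (Hb ^ 2)).of_nonneg_of_le (fun k => sq_nonneg _)
      fun k => by rw [mul_pow, mul_comm]; gcongr; exacts [hhpos k, hHb k]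
  filter_upwards [ae_tendsto_sum_range_smul_of_condExp_norm_sq_le
    (fun k => (hadapt (k + 1)).stronglyMeasurable) (fun k => hint2 (k + 1)) hmds hC hb]
    with ω ⟨l, hl⟩
  obtain ⟨B, hB⟩ := hl.norm.bddAbove_range
  refine exists_norm_le_of_damped_recursion (a := fun n => γ (n + 1) * r n) (N := N)
    (fun n hn => ⟨mul_nonneg (hγpos _).le (hrpos n), by linarith [hN n hn]⟩)
    (fun n => hB ⟨n, rfl⟩) fun n => ?_
  rw [hrec, sum_range_succ, add_sub_cancel_left]

/-- almost-sure boundedness of the martingale-driven damped recursion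
`m̃_{n+1} = (1 - γ_{n+1} r_n) m̃_n + γ_{n+1} h_n Δ_{n+1}`. -/
theorem stmt11 {Ω : Type*} {m0 : MeasurableSpace Ω} {μ : Measure Ω}
    [IsProbabilityMeasure μ] (𝓕 : Filtration ℕ m0) {d : ℕ}
    (r h γ : ℕ → ℝ) (rinf : ℝ) (hrinf : 0 < rinf)
    (hrpos : ∀ n, 0 ≤ r n) (hhpos : ∀ n, 0 ≤ h n)
    (hrbdd : ∃ R, ∀ n, r n ≤ R) (hhbdd : ∃ Hb, ∀ n, h n ≤ Hb)
    (hrlim : Tendsto r atTop (nhds rinf))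
    (hγpos : ∀ n, 0 < γ n) (hγ2 : Summable fun n => γ n ^ 2)
    (hstep : ∃ N, ∀ n ≥ N, 0 ≤ 1 - γ (n + 1) * r n)
    (Δ : ℕ → Ω → EuclideanSpace ℝ (Fin d))
    (hadapt : Adapted 𝓕 Δ)
    (hint : ∀ n, Integrable (Δ n) μ)
    (hint2 : ∀ n, Integrable (fun ω => ‖Δ n ω‖ ^ 2) μ)
    (hmds : ∀ n, μ[Δ (n + 1) | 𝓕 n] =ᵐ[μ] 0)
    (C : Ω → ℝ)
    (hC : ∀ᵐ ω ∂μ, ∀ n, (μ[fun ω' => ‖Δ (n + 1) ω'‖ ^ 2 | 𝓕 n]) ω ≤ C ω)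
    (m0v : EuclideanSpace ℝ (Fin d)) (mt : ℕ → Ω → EuclideanSpace ℝ (Fin d))
    (hmt0 : ∀ ω, mt 0 ω = m0v)
    (hrec : ∀ n ω, mt (n + 1) ω =
      (1 - γ (n + 1) * r n) • mt n ω + (γ (n + 1) * h n) • Δ (n + 1) ω) :
    ∀ᵐ ω ∂μ, ∃ M, ∀ n, ‖mt n ω‖ ≤ M :=
  stmt11_general 𝓕 r h γ hrpos hhpos hhbdd hγpos hγ2 hstep Δ hadapt hint2 hmds C hC mt hrec
end

section
/- Let $r_\infty, h_\infty > 0$ and $\theta \geq 0$ with $r_\infty > 2\theta$. For $k, \ell \in \{1,\dots,d\}$ and positive reals $\pi_1,\dots,\pi_d$, let $\nu_k^\pm = -\frac{r_\infty}{2} \pm \sqrt{r_\infty^2/4 - h_\infty \pi_k}$ (complex square root convention). Then $\frac{-h_\infty^2}{(\nu_k^+ + \nu_\ell^+ + 2\theta)(\nu_k^- + \nu_\ell^- + 2\theta)}\left(\frac{1}{\nu_k^- + \nu_\ell^+ + 2\theta} + \frac{1}{\nu_k^+ + \nu_\ell^- + 2\theta}\right) = \frac{h_\infty^2}{(r_\infty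 - 2\theta)\big(h_\infty(\pi_k + \pi_\ell) + 2\theta(\theta - r_\infty)\big) + \frac{h_\infty^2 (\pi_k - \pi_\ell)^2}{2(r_\infty - 2\theta)}}$, provided all denominators are nonzero. -/
/-- The four denominators pair up as `(c² - (a + b)²)(c² - (a - b)²)`, which depends only on
`a²` and `b²`; this is why the square-root branches drop out of the final formula. -/
theorem neg_div_mul_one_div_add_one_div {K : Type*} [Field K] (a b c H : K)
    (h₁ : c + a + b ≠ 0) (h₂ : c - a - b ≠ 0) (h₃ : c - a + b ≠ 0) (h₄ : c + a - b ≠ 0) :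
    -H / ((c + a + b) * (c - a - b)) * (1 / (c - a + b) + 1 / (c + a - b)) =
      -2 * H * c / ((c ^ 2 - a ^ 2 - b ^ 2) ^ 2 - 4 * a ^ 2 * b ^ 2) := by
  rw [show (c ^ 2 - a ^ 2 - b ^ 2) ^ 2 - 4 * a ^ 2 * b ^ 2 =
      (c + a + b) * (c - a - b) * ((c - a + b) * (c + a - b)) by ring]
  field_simp
  ring

theorem stmt14_general (r h θ πk πl : ℝ) (hrθ : 2 * θ < r)
    (νkp νkm νlp νlm : ℂ)
    (hνkp : νkp = -(r : ℂ) / 2 + ((r ^ 2 / 4 - h * πk : ℝ) : ℂ) ^ ((1 : ℂ) / 2))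
    (hνkm : νkm = -(r : ℂ) / 2 - ((r ^ 2 / 4 - h * πk : ℝ) : ℂ) ^ ((1 : ℂ) / 2))
    (hνlp : νlp = -(r : ℂ) / 2 + ((r ^ 2 / 4 - h * πl : ℝ) : ℂ) ^ ((1 : ℂ) / 2))
    (hνlm : νlm = -(r : ℂ) / 2 - ((r ^ 2 / 4 - h * πl : ℝ) : ℂ) ^ ((1 : ℂ) / 2))
    (h1 : νkp + νlp + 2 * θ ≠ 0) (h2 : νkm + νlm + 2 * θ ≠ 0)
    (h3 : νkm + νlp + 2 * θ ≠ 0) (h4 : νkp + νlm + 2 * θ ≠ 0) :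
    (-(h : ℂ) ^ 2 / ((νkp + νlp + 2 * θ) * (νkm + νlm + 2 * θ))) *
        (1 / (νkm + νlp + 2 * θ) + 1 / (νkp + νlm + 2 * θ)) =
      ((h ^ 2 / ((r - 2 * θ) * (h * (πk + πl) + 2 * θ * (θ - r)) +
          h ^ 2 * (πk - πl) ^ 2 / (2 * (r - 2 * θ))) : ℝ) : ℂ) := by
  set a : ℂ := ((r ^ 2 / 4 - h * πk : ℝ) : ℂ) ^ ((1 : ℂ) / 2)
  set b : ℂ := ((r ^ 2 / 4 - h * πl : ℝ) : ℂ) ^ ((1 : ℂ) / 2)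
  set c : ℂ := 2 * θ - r with hc
  set D : ℝ := (r - 2 * θ) * (h * (πk + πl) + 2 * θ * (θ - r)) +
    h ^ 2 * (πk - πl) ^ 2 / (2 * (r - 2 * θ))
  have hrθ' : (r : ℂ) - 2 * θ ≠ 0 := by exact_mod_cast (sub_pos.2 hrθ).ne'
  have hquartic : (c ^ 2 - a ^ 2 - b ^ 2) ^ 2 - 4 * a ^ 2 * b ^ 2 = 2 * (r - 2 * θ) * D := by
    simp only [a, b, c, D, one_div, Complex.cpow_ofNat_inv_pow]
    push_cast
    field_simp
    ring
  subst hνkp hνkm hνlp hνlm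
  calc _ = -(h : ℂ) ^ 2 / ((c + a + b) * (c - a - b)) * (1 / (c - a + b) + 1 / (c + a - b)) := by
        ring
    _ = -2 * (h : ℂ) ^ 2 * c / ((c ^ 2 - a ^ 2 - b ^ 2) ^ 2 - 4 * a ^ 2 * b ^ 2) :=
        neg_div_mul_one_div_add_one_div a b c _ (by convert h1 using 1; ring)
          (by convert h2 using 1; ring) (by convert h3 using 1; ring) (by convert h4 using 1; ring)
    _ = (h : ℂ) ^ 2 / D := by
        rw [hquartic, hc, show -2 * (h : ℂ) ^ 2 * (2 * θ - r) = 2 * (r - 2 * θ) * h ^ 2 by ring,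
          mul_div_mul_left _ _ (mul_ne_zero two_ne_zero hrθ')]
    _ = _ := by push_cast; rfl

/-- closed-form identity for the entries of the asymptotic covariance
matrix in the CLT for momentum methods, where
`ν^± = -r∞/2 ± √(r∞²/4 - h∞ π)` (complex square root convention). -/
theorem stmt14 (r h θ πk πl : ℝ) (hr : 0 < r) (hh : 0 < h) (hθ : 0 ≤ θ)
    (hrθ : 2 * θ < r) (hπk : 0 < πk) (hπl : 0 < πl)
    (νkp νkm νlp νlm : ℂ)
    (hνkp : νkp = -(r : ℂ) / 2 + ((r ^ 2 / 4 - h * πk : ℝ) : ℂ) ^ ((1 : ℂ) / 2))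
    (hνkm : νkm = -(r : ℂ) / 2 - ((r ^ 2 / 4 - h * πk : ℝ) : ℂ) ^ ((1 : ℂ) / 2))
    (hνlp : νlp = -(r : ℂ) / 2 + ((r ^ 2 / 4 - h * πl : ℝ) : ℂ) ^ ((1 : ℂ) / 2))
    (hνlm : νlm = -(r : ℂ) / 2 - ((r ^ 2 / 4 - h * πl : ℝ) : ℂ) ^ ((1 : ℂ) / 2))
    (h1 : νkp + νlp + 2 * θ ≠ 0) (h2 : νkm + νlm + 2 * θ ≠ 0)
    (h3 : νkm + νlp + 2 * θ ≠ 0) (h4 : νkp + νlm + 2 * θ ≠ 0)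
    (h5 : (r - 2 * θ) * (h * (πk + πl) + 2 * θ * (θ - r)) +
      h ^ 2 * (πk - πl) ^ 2 / (2 * (r - 2 * θ)) ≠ 0) :
    (-(h : ℂ) ^ 2 / ((νkp + νlp + 2 * θ) * (νkm + νlm + 2 * θ))) *
        (1 / (νkm + νlp + 2 * θ) + 1 / (νkp + νlm + 2 * θ)) =
      ((h ^ 2 / ((r - 2 * θ) * (h * (πk + πl) + 2 * θ * (θ - r)) +
          h ^ 2 * (πk - πl) ^ 2 / (2 * (r - 2 * θ))) : ℝ) : ℂ) :=
  stmt14_general r h θ πk πl hrθ νkp νkm νlp νlm hνkp hνkm hνlp hνlm h1 h2 h3 h4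
end
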